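/- arXiv:2201.08288 — 3 statements merged into one kernel-verified Lean document; each statement's English description precedes it below -/
import Mathlib

section
/- Let a ∈ [0,1), b ∈ (0,1] with a < b. For every x in the set P_{(a,b)} = (0,1) \ ({a} if a>0, ∪ {b} if b<1), one has the convergent expansion 𝟙(a < x < b) = Σ_{j=0}^∞ c_j(x)·g_j(a,b). -/
/-- `cfun j x`: c₀(x)=1, c_{2j-1}(x)=cos((2j-1)x), c_{2j}(x)=sin((2j-1)x). -/
noncomputable def cfun (j : ℕ) (x : ℝ) : ℝ :=
  if j = 0 then 1
  else if j % 2 = 1 then Real.cos ((j : ℝ) * x)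
  else Real.sin (((j : ℝ) - 1) * x)

/-- `gfun j a b`: the coefficients g_j(a,b). -/
noncomputable def gfun (j : ℕ) (a b : ℝ) : ℝ :=
  if j = 0 then
    1 - (1 / 2) * ((if 0 < a then (1 : ℝ) else 0) + (if b < 1 then (1 : ℝ) else 0))
  else if j % 2 = 1 then
    (2 / (Real.pi * (j : ℝ))) *
      ((if b < 1 then (1 : ℝ) else 0) * Real.sin ((j : ℝ) * b) -
        (if 0 < a then (1 : ℝ) else 0) * Real.sin ((j : ℝ) * a))
  else
    (2 / (Real.pi * ((j : ℝ) - 1))) *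
      ((if 0 < a then (1 : ℝ) else 0) * Real.cos (((j : ℝ) - 1) * a) -
        (if b < 1 then (1 : ℝ) else 0) * Real.cos (((j : ℝ) - 1) * b))

/-- Indicator of the open interval (a,b). -/
noncomputable def indIoo (a b x : ℝ) : ℝ := if a < x ∧ x < b then 1 else 0

/-- The Jth partial sum 1_J(x,a,b) = Σ_{j=0}^{2J} c_j(x)·g_j(a,b). -/
noncomputable def oneJ (J : ℕ) (x a b : ℝ) : ℝ :=
  ∑ j ∈ Finset.range (2 * J + 1), cfun j x * gfun j a b

/-!
Pairing the terms of index `2k + 1` and `2k + 2` and using the subtraction formula for the sine,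
the partial sum up to index `2J` becomes `g₀ + 𝟙(b < 1) S_J(b - x) + 𝟙(0 < a) S_J(x - a)`, where
`S_J(t) = Σ_{k<J} 2 sin((2k+1)t) / (π(2k+1))` is the Fourier partial sum of the square wave
`sign(t) / 2`; the terms of odd index are `O(1/j)`. For `0 < t < π` and `w = e^{it}`, the series
`Σ w^(2k+1) / (2k+1)` converges by Dirichlet's test, so by Abel's theorem its sum is the boundary
value `artanh w = -½ log ((1 - w) / (1 + w))`. Since `(1 - w) / (1 + w) = -i tan(t/2)`, the
imaginary part of this sum, `Σ sin((2k+1)t) / (2k+1)`, equals `π/4`.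
-/

open Filter Finset Topology
open scoped Real

namespace Complex

noncomputable def artanh (z : ℂ) : ℂ := -(1 / 2) * log ((1 - z) / (1 + z))

lemma neg_I_mul_arctan_I_mul (z : ℂ) : -I * arctan (I * z) = artanh z := by
  have h : I * z * I = -z := by rw [mul_right_comm, I_mul_I, neg_one_mul]
  rw [arctan, artanh, h, ← sub_eq_add_neg, sub_neg_eq_add, ← mul_assoc]
  congr 1
  linear_combination (1 / 2 : ℂ) * I_sq

lemma hasSum_artanh {z : ℂ} (hz : ‖z‖ < 1) :
    HasSum (fun k : ℕ ↦ z ^ (2 * k + 1) / (2 * k + 1 : ℕ)) (artanh z) := by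
  have h := (hasSum_arctan (z := I * z) (by simpa using hz)).mul_left (-I)
  rw [neg_I_mul_arctan_I_mul] at h
  refine h.congr_fun fun k ↦ ?_
  rw [mul_pow, pow_succ I, pow_mul, I_sq, ← mul_div_assoc]
  congr 1
  have hsign : ((-1 : ℂ) ^ k) ^ 2 = 1 := by rw [← pow_mul, pow_mul', neg_one_sq, one_pow]
  linear_combination (((-1 : ℂ) ^ k) ^ 2 * z ^ (2 * k + 1)) * I_sq - z ^ (2 * k + 1) * hsign

lemma continuousAt_artanh {w : ℂ} (hw : (1 - w) / (1 + w) ∈ slitPlane) : ContinuousAt artanh w := by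
  have hden : 1 + w ≠ 0 := fun h ↦ slitPlane_ne_zero hw (by rw [h, div_zero])
  exact continuousAt_const.mul (((continuousAt_const.sub continuousAt_id).div
    (continuousAt_const.add continuousAt_id) hden).clog hw)

lemma exists_pos_one_sub_div_one_add_exp_mul_I {t : ℝ} (h0 : 0 < t) (hπ : t < π) :
    ∃ r : ℝ, 0 < r ∧ (1 - exp (t * I)) / (1 + exp (t * I)) = r * -I := by
  have hcos : Real.cos (t / 2) ≠ 0 := (Real.cos_pos_of_mem_Ioo ⟨by linarith, by linarith⟩).ne'
  refine ⟨Real.tan (t / 2), Real.tan_pos_of_pos_of_lt_pi_div_two (by linarith) (by linarith), ?_⟩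
  rw [← ofReal_ne_zero, ofReal_cos] at hcos
  rw [ofReal_tan, tan_eq_sin_div_cos]
  push_cast at hcos ⊢
  set c := cos (t / 2 : ℂ)
  set s := sin (t / 2 : ℂ)
  have hexp : exp (t * I) = (c + s * I) ^ 2 := by
    rw [← exp_mul_I, ← exp_nat_mul]; push_cast; ring_nf
  have hden : 1 + (c + s * I) ^ 2 = 2 * c * (c + s * I) := by
    linear_combination (-1 : ℂ) * sin_sq_add_cos_sq (t / 2 : ℂ) + s ^ 2 * I_sq
  have hnum : 1 - (c + s * I) ^ 2 = -2 * s * I * (c + s * I) := by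
    linear_combination (-1 : ℂ) * sin_sq_add_cos_sq (t / 2 : ℂ) + s ^ 2 * I_sq
  have hne : c + s * I ≠ 0 := by rw [← exp_mul_I]; exact exp_ne_zero _
  rw [hexp, hden, hnum]
  field_simp

lemma one_sub_div_one_add_exp_mul_I_mem_slitPlane {t : ℝ} (h0 : 0 < t) (hπ : t < π) :
    (1 - exp (t * I)) / (1 + exp (t * I)) ∈ slitPlane := by
  obtain ⟨r, hr, h⟩ := exists_pos_one_sub_div_one_add_exp_mul_I h0 hπ
  rw [h, mem_slitPlane_iff]
  exact Or.inr (by simpa using hr.ne')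

lemma artanh_exp_mul_I_im {t : ℝ} (h0 : 0 < t) (hπ : t < π) :
    (artanh (exp (t * I))).im = π / 4 := by
  obtain ⟨r, hr, h⟩ := exists_pos_one_sub_div_one_add_exp_mul_I h0 hπ
  rw [artanh, h, show -(1 / 2 : ℂ) = ((-(1 / 2) : ℝ) : ℂ) by push_cast; ring, im_ofReal_mul,
    log_im, arg_real_mul _ hr, arg_neg_I]
  ring

lemma tendsto_tsum_mul_pow_odd_nhdsLT {f : ℕ → ℂ} {l : ℂ}
    (h : Tendsto (fun n ↦ ∑ i ∈ range n, f i) atTop (𝓝 l)) :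
    Tendsto (fun s : ℝ ↦ ∑' n, f n * (s : ℂ) ^ (2 * n + 1)) (𝓝[<] 1) (𝓝 l) := by
  have hsq : Tendsto (fun s : ℝ ↦ s ^ 2) (𝓝[<] 1) (𝓝[<] 1) := by
    refine tendsto_nhdsWithin_of_tendsto_nhds_of_eventually_within _ ?_ ?_
    · simpa using ((continuous_pow 2).tendsto (1 : ℝ)).mono_left nhdsWithin_le_nhds
    · filter_upwards [Ioo_mem_nhdsLT (show (-1 : ℝ) < 1 by norm_num)] with s hs
      exact (sq_lt_one_iff_abs_lt_one s).2 (abs_lt.2 hs)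
  have habel := ((tendsto_tsum_powerSeries_nhdsWithin_lt h).comp
    (tendsto_map.comp hsq)).mul
    ((continuous_ofReal.tendsto 1).mono_left nhdsWithin_le_nhds)
  rw [ofReal_one, mul_one] at habel
  refine habel.congr fun s ↦ ?_
  simp only [Function.comp_apply, ofReal_pow, ← tsum_mul_right, mul_assoc, ← pow_mul, ← pow_succ]

lemma norm_sum_range_pow_odd_le {w : ℂ} (hw : ‖w‖ ≤ 1) (hw2 : w ^ 2 ≠ 1) (n : ℕ) :
    ‖∑ i ∈ range n, w ^ (2 * i + 1)‖ ≤ 2 / ‖w ^ 2 - 1‖ := by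
  have hgeom : ∑ i ∈ range n, w ^ (2 * i + 1) = w * (((w ^ 2) ^ n - 1) / (w ^ 2 - 1)) := by
    rw [← geom_sum_eq hw2, mul_sum]
    exact sum_congr rfl fun i _ ↦ by ring
  have hnum : ‖(w ^ 2) ^ n - 1‖ ≤ 2 := by
    calc ‖(w ^ 2) ^ n - 1‖ ≤ ‖w‖ ^ (2 * n) + 1 := by
          simpa [← pow_mul] using norm_sub_le (w ^ (2 * n)) 1
      _ ≤ 2 := by linarith [pow_le_one₀ (norm_nonneg w) hw (n := 2 * n)]
  rw [hgeom, norm_mul, norm_div]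
  calc ‖w‖ * (‖(w ^ 2) ^ n - 1‖ / ‖w ^ 2 - 1‖) ≤ 1 * (2 / ‖w ^ 2 - 1‖) := by gcongr
    _ = _ := one_mul _

lemma cauchySeq_sum_range_pow_odd_div {w : ℂ} (hw : ‖w‖ ≤ 1) (hw2 : w ^ 2 ≠ 1) :
    CauchySeq fun n ↦ ∑ i ∈ range n, w ^ (2 * i + 1) / (2 * i + 1 : ℕ) := by
  have hanti : Antitone fun i : ℕ ↦ ((2 * i + 1 : ℕ) : ℝ)⁻¹ :=
    antitone_iff_forall_lt.2 fun _ _ _ ↦ by gcongr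
  have hzero : Tendsto (fun i : ℕ ↦ ((2 * i + 1 : ℕ) : ℝ)⁻¹) atTop (𝓝 0) :=
    tendsto_inv_atTop_zero.comp (tendsto_natCast_atTop_atTop.comp
      (tendsto_atTop_mono (fun i ↦ (by omega : i ≤ 2 * i + 1)) tendsto_id))
  convert hanti.cauchySeq_series_mul_of_tendsto_zero_of_bounded hzero
    (norm_sum_range_pow_odd_le hw hw2) using 3 with n i
  rw [real_smul, div_eq_inv_mul, ofReal_inv, ofReal_natCast]

lemma tendsto_sum_range_pow_odd_div {w : ℂ} (hw : ‖w‖ = 1) (hslit : (1 - w) / (1 + w) ∈ slitPlane) :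
    Tendsto (fun n ↦ ∑ i ∈ range n, w ^ (2 * i + 1) / (2 * i + 1 : ℕ)) atTop (𝓝 (artanh w)) := by
  have hsq : w ^ 2 ≠ 1 := by
    rintro h
    rcases sq_eq_one_iff.mp h with rfl | rfl <;> norm_num at hslit
  obtain ⟨l, hl⟩ := cauchySeq_tendsto_of_complete (cauchySeq_sum_range_pow_odd_div hw.le hsq)
  have hradial : Tendsto (fun s : ℝ ↦ artanh (s * w)) (𝓝[<] 1) (𝓝 (artanh w)) := by
    refine (continuousAt_artanh hslit).tendsto.comp ?_
    simpa using ((by fun_prop : Continuous fun s : ℝ ↦ (s : ℂ) * w).tendsto 1).mono_left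
      nhdsWithin_le_nhds
  have hseries : ∀ᶠ s : ℝ in 𝓝[<] 1,
      ∑' n, w ^ (2 * n + 1) / (2 * n + 1 : ℕ) * (s : ℂ) ^ (2 * n + 1) = artanh (s * w) := by
    filter_upwards [Ioo_mem_nhdsLT (show (-1 : ℝ) < 1 by norm_num)] with s hs
    have hsw : ‖(s : ℂ) * w‖ < 1 := by simpa [hw, abs_lt] using hs
    rw [← (hasSum_artanh hsw).tsum_eq]
    exact tsum_congr fun n ↦ by ring
  rwa [tendsto_nhds_unique (tendsto_tsum_mul_pow_odd_nhdsLT hl)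
    (hradial.congr' (hseries.mono fun _ h ↦ h.symm))] at hl

end Complex

lemma Real.tendsto_sum_range_sin_odd_mul_div {t : ℝ} (h0 : 0 < t) (hπ : t < π) :
    Tendsto (fun n ↦ ∑ k ∈ range n, Real.sin ((2 * k + 1) * t) / (2 * k + 1)) atTop
      (𝓝 (π / 4)) := by
  have h := (Complex.continuous_im.tendsto _).comp (Complex.tendsto_sum_range_pow_odd_div
    (Complex.norm_exp_ofReal_mul_I t) (Complex.one_sub_div_one_add_exp_mul_I_mem_slitPlane h0 hπ))
  rw [Complex.artanh_exp_mul_I_im h0 hπ] at h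
  refine h.congr fun n ↦ ?_
  simp only [Function.comp_apply, Complex.im_sum]
  refine sum_congr rfl fun k _ ↦ ?_
  rw [← Complex.exp_nat_mul, Complex.div_natCast_im, ← mul_assoc, ← Complex.ofReal_natCast,
    ← Complex.ofReal_mul, Complex.exp_ofReal_mul_I_im]
  push_cast
  rfl

noncomputable def squareWaveSum (n : ℕ) (t : ℝ) : ℝ :=
  ∑ k ∈ range n, 2 / (π * (2 * k + 1)) * Real.sin ((2 * k + 1) * t)

lemma tendsto_squareWaveSum {t : ℝ} (h₁ : -π < t) (h₂ : t < π) :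
    Tendsto (fun n ↦ squareWaveSum n t) atTop (𝓝 (Real.sign t / 2)) := by
  have hpos : ∀ s, 0 < s → s < π → Tendsto (fun n ↦ squareWaveSum n s) atTop (𝓝 (1 / 2)) := by
    intro s hs₀ hs₁
    have h := (Real.tendsto_sum_range_sin_odd_mul_div hs₀ hs₁).const_mul (2 / π)
    rw [show 2 / π * (π / 4) = 1 / 2 by field_simp; norm_num] at h
    refine h.congr fun n ↦ ?_
    rw [squareWaveSum, mul_sum]
    exact sum_congr rfl fun k _ ↦ by field_simp
  rcases lt_trichotomy t 0 with ht | rfl | ht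
  · have h := (hpos (-t) (by linarith) (by linarith)).neg
    rw [Real.sign_of_neg ht]
    convert h using 1
    · funext n
      simp only [squareWaveSum, mul_neg, Real.sin_neg, ← sum_neg_distrib, neg_neg]
    · norm_num
  · simp [squareWaveSum]
  · simpa [Real.sign_of_pos ht] using hpos t ht h₂

lemma tendsto_of_tendsto_two_mul_of_tendsto_two_mul_add_one {X : Type*} [TopologicalSpace X]
    {u : ℕ → X} {x : X} (heven : Tendsto (fun n ↦ u (2 * n)) atTop (𝓝 x))
    (hodd : Tendsto (fun n ↦ u (2 * n + 1)) atTop (𝓝 x)) : Tendsto u atTop (𝓝 x) := by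
  intro s hs
  obtain ⟨N₁, h₁⟩ := eventually_atTop.1 (heven hs)
  obtain ⟨N₂, h₂⟩ := eventually_atTop.1 (hodd hs)
  refine eventually_atTop.2 ⟨2 * (N₁ + N₂), fun n hn ↦ ?_⟩
  obtain ⟨k, rfl | rfl⟩ := Nat.even_or_odd' n
  exacts [h₁ k (by omega), h₂ k (by omega)]

lemma cfun_two_mul_add_one (k : ℕ) (x : ℝ) : cfun (2 * k + 1) x = Real.cos ((2 * k + 1) * x) := by
  rw [cfun, if_neg (by omega), if_pos (by omega)]
  push_cast
  rfl

lemma cfun_two_mul_add_two (k : ℕ) (x : ℝ) : cfun (2 * k + 2) x = Real.sin ((2 * k + 1) * x) := by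
  rw [cfun, if_neg (by omega), if_neg (by omega)]
  push_cast
  ring_nf

lemma gfun_two_mul_add_one (k : ℕ) (a b : ℝ) : gfun (2 * k + 1) a b =
    2 / (π * (2 * k + 1)) * ((if b < 1 then 1 else 0) * Real.sin ((2 * k + 1) * b) -
      (if 0 < a then 1 else 0) * Real.sin ((2 * k + 1) * a)) := by
  rw [gfun, if_neg (by omega), if_pos (by omega)]
  push_cast
  rfl

lemma gfun_two_mul_add_two (k : ℕ) (a b : ℝ) : gfun (2 * k + 2) a b =
    2 / (π * (2 * k + 1)) * ((if 0 < a then 1 else 0) * Real.cos ((2 * k + 1) * a) -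
      (if b < 1 then 1 else 0) * Real.cos ((2 * k + 1) * b)) := by
  rw [gfun, if_neg (by omega), if_neg (by omega)]
  push_cast
  ring_nf

lemma oneJ_eq_squareWaveSum (J : ℕ) (x a b : ℝ) : oneJ J x a b = gfun 0 a b +
    (if b < 1 then 1 else 0) * squareWaveSum J (b - x) +
    (if 0 < a then 1 else 0) * squareWaveSum J (x - a) := by
  induction J with
  | zero => simp [oneJ, squareWaveSum, cfun]
  | succ J ih =>
    rw [oneJ, show 2 * (J + 1) + 1 = 2 * J + 1 + 1 + 1 by ring, sum_range_succ, sum_range_succ,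
      ← oneJ, ih]
    simp only [squareWaveSum, sum_range_succ, cfun_two_mul_add_one, cfun_two_mul_add_two,
      gfun_two_mul_add_one, gfun_two_mul_add_two, mul_sub, Real.sin_sub]
    ring

lemma tendsto_cfun_mul_gfun_two_mul_add_one (x a b : ℝ) :
    Tendsto (fun k : ℕ ↦ cfun (2 * k + 1) x * gfun (2 * k + 1) a b) atTop (𝓝 0) := by
  have hcoeff : Tendsto (fun k : ℕ ↦ 2 / (π * (2 * k + 1))) atTop (𝓝 0) :=
    tendsto_const_nhds.div_atTop (Tendsto.const_mul_atTop Real.pi_pos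
      (tendsto_atTop_add_const_right _ _ (tendsto_natCast_atTop_atTop.const_mul_atTop two_pos)))
  have hind : ∀ (p : Prop) [Decidable p] (y : ℝ),
      |(if p then (1 : ℝ) else 0) * Real.sin y| ≤ 1 := by
    intro p _ y
    split_ifs <;> simp [Real.abs_sin_le_one]
  refine squeeze_zero_norm (fun k ↦ ?_) (by simpa using hcoeff.mul_const 2)
  rw [cfun_two_mul_add_one, gfun_two_mul_add_one, Real.norm_eq_abs, abs_mul, abs_mul,
    abs_of_pos (show 0 < 2 / (π * (2 * k + 1)) by positivity)]
  calc _ ≤ 1 * (2 / (π * (2 * k + 1)) * (1 + 1)) := by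
        gcongr ?_ * (_ * ?_)
        exacts [Real.abs_cos_le_one _, (abs_sub _ _).trans (add_le_add (hind _ _) (hind _ _))]
    _ = _ := by ring

lemma gfun_zero_add_mul_sign_eq_indIoo {a b x : ℝ} (hab : a < b) (hx : x ∈ Set.Ioo (0 : ℝ) 1)
    (hxa : 0 < a → x ≠ a) (hxb : b < 1 → x ≠ b) :
    gfun 0 a b + (if b < 1 then 1 else 0) * (Real.sign (b - x) / 2) +
      (if 0 < a then 1 else 0) * (Real.sign (x - a) / 2) = indIoo a b x := by
  have hxa' : x ≠ a := by
    by_cases ha : 0 < a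
    · exact hxa ha
    · exact (lt_of_le_of_lt (not_lt.1 ha) hx.1).ne'
  have hxb' : x ≠ b := by
    by_cases hb : b < 1
    · exact hxb hb
    · exact (lt_of_lt_of_le hx.2 (not_lt.1 hb)).ne
  rw [gfun, if_pos rfl, indIoo]
  rcases hxa'.lt_or_gt with h₁ | h₁ <;> rcases hxb'.lt_or_gt with h₂ | h₂ <;>
    simp [Real.sign_of_pos, Real.sign_of_neg, h₁, h₂] <;>
    split_ifs <;> linarith [hx.1, hx.2]

theorem indicator_expansion_general (a b : ℝ) (ha : 0 ≤ a) (hb1 : b ≤ 1)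
    (hab : a < b) (x : ℝ) (hx : x ∈ Set.Ioo (0 : ℝ) 1)
    (hxa : 0 < a → x ≠ a) (hxb : b < 1 → x ≠ b) :
    Filter.Tendsto (fun N : ℕ => ∑ j ∈ Finset.range (N + 1), cfun j x * gfun j a b)
      Filter.atTop (nhds (indIoo a b x)) := by
  obtain ⟨hx₀, hx₁⟩ := hx
  have hπ := Real.pi_gt_three
  have heven : Tendsto (fun J ↦ oneJ J x a b) atTop (𝓝 (indIoo a b x)) := by
    rw [← gfun_zero_add_mul_sign_eq_indIoo hab ⟨hx₀, hx₁⟩ hxa hxb]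
    simp_rw [oneJ_eq_squareWaveSum]
    exact (tendsto_const_nhds.add
      ((tendsto_squareWaveSum (by linarith) (by linarith)).const_mul _)).add
        ((tendsto_squareWaveSum (by linarith) (by linarith)).const_mul _)
  refine tendsto_of_tendsto_two_mul_of_tendsto_two_mul_add_one heven ?_
  simpa using (heven.add (tendsto_cfun_mul_gfun_two_mul_add_one x a b)).congr
    fun J ↦ (sum_range_succ _ _).symm

/-- for x in P_{(a,b)} = (0,1) \ ({a} if a>0 ∪ {b} if b<1), the partial sums
Σ_{j=0}^{N} c_j(x)·g_j(a,b) converge to 𝟙(a < x < b). -/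
theorem indicator_expansion (a b : ℝ) (ha : 0 ≤ a) (ha1 : a < 1) (hb : 0 < b) (hb1 : b ≤ 1)
    (hab : a < b) (x : ℝ) (hx : x ∈ Set.Ioo (0 : ℝ) 1)
    (hxa : 0 < a → x ≠ a) (hxb : b < 1 → x ≠ b) :
    Filter.Tendsto (fun N : ℕ => ∑ j ∈ Finset.range (N + 1), cfun j x * gfun j a b)
      Filter.atTop (nhds (indIoo a b x)) :=
  indicator_expansion_general a b ha hb1 hab x hx hxa hxb
end

section
/- Let a ∈ [0,1), b ∈ (0,1] with a < b. Then the sequence of functions {1_J(·,a,b)}_{J=0}^∞ is uniformly bounded on (0,1): there exists a constant M such that |1_J(x,a,b)| ≤ M for all J ∈ ℕ and all x ∈ (0,1). -/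
open Real Finset
lemma sinS_mul (t : ℝ) (m : ℕ) :
    (∑ k ∈ range m, Real.sin ((2*(k:ℝ)+1)*t)) * (2 * Real.sin t) = 1 - Real.cos (2*(m:ℝ)*t) := by
  induction m with
  | zero => simp
  | succ m ih =>
    have key : Real.cos (2*(m:ℝ)*t) - Real.cos (2*((m:ℝ)+1)*t)
        = Real.sin ((2*(m:ℝ)+1)*t) * (2*Real.sin t) := by
      rw [Real.cos_sub_cos]
      have e1 : (2*(m:ℝ)*t + 2*((m:ℝ)+1)*t)/2 = (2*(m:ℝ)+1)*t := by ring
      have e2 : (2*(m:ℝ)*t - 2*((m:ℝ)+1)*t)/2 = -t := by ring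
      rw [e1, e2, Real.sin_neg]; ring
    rw [Finset.sum_range_succ, add_mul, ih]
    push_cast
    linarith [key]

lemma S_abs_le {t : ℝ} (ht : 0 < t) (ht1 : t ≤ 1) (m : ℕ) :
    |∑ k ∈ range m, Real.sin ((2*(k:ℝ)+1)*t)| ≤ π / (2*t) := by
  have hpi := Real.pi_gt_three
  have hs : 2/π * t ≤ Real.sin t := Real.mul_le_sin ht.le (by linarith)
  have hs0 : 0 < Real.sin t := lt_of_lt_of_le (by positivity) hs
  have h := sinS_mul t m
  have hc1 : Real.cos (2*(m:ℝ)*t) ≤ 1 := Real.cos_le_one _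
  have hc2 : -1 ≤ Real.cos (2*(m:ℝ)*t) := Real.neg_one_le_cos _
  set S := ∑ k ∈ range m, Real.sin ((2*(k:ℝ)+1)*t) with hS
  have hS0 : 0 ≤ S := by nlinarith
  have hmul := mul_le_mul_of_nonneg_left hs hS0
  rw [abs_of_nonneg hS0, le_div_iff₀ (by positivity)]
  have hpi0 : (0:ℝ) < π := by linarith
  have h2 : S * Real.sin t ≤ 1 := by nlinarith
  have h3 : S * (2/π*t) ≤ 1 := le_trans hmul h2
  calc S * (2*t) = (S * (2/π*t)) * π := by field_simp
    _ ≤ 1 * π := by nlinarith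
    _ = π := one_mul π

lemma dirichlet_bound (f g : ℕ → ℝ) (B : ℝ) (hf0 : ∀ k, 0 ≤ f k) (hmono : ∀ k, f (k+1) ≤ f k)
    (hB : ∀ m, |∑ k ∈ range m, g k| ≤ B) (n : ℕ) :
    |∑ k ∈ range n, f k * g k| ≤ 2 * B * f 0 := by
  have hB0 : 0 ≤ B := le_trans (abs_nonneg _) (hB 0)
  have hanti : Antitone f := antitone_nat_of_succ_le hmono
  have hbp := Finset.sum_range_by_parts f g n
  simp only [smul_eq_mul] at hbp
  rw [hbp]
  have h1 : |f (n-1) * ∑ i ∈ range n, g i| ≤ B * f 0 := by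
    rw [abs_mul]
    calc |f (n-1)| * |∑ i ∈ range n, g i| = f (n-1) * |∑ i ∈ range n, g i| := by
          rw [abs_of_nonneg (hf0 _)]
      _ ≤ f 0 * B := mul_le_mul (hanti (Nat.zero_le _)) (hB n) (abs_nonneg _) (hf0 0)
      _ = B * f 0 := mul_comm _ _
  have h2 : |∑ i ∈ range (n-1), (f (i+1) - f i) * ∑ j ∈ range (i+1), g j| ≤ B * f 0 := by
    calc |∑ i ∈ range (n-1), (f (i+1) - f i) * ∑ j ∈ range (i+1), g j|
        ≤ ∑ i ∈ range (n-1), |(f (i+1) - f i) * ∑ j ∈ range (i+1), g j| :=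
          Finset.abs_sum_le_sum_abs _ _
      _ ≤ ∑ i ∈ range (n-1), (f i - f (i+1)) * B := by
          apply Finset.sum_le_sum
          intro i _
          rw [abs_mul, abs_sub_comm, abs_of_nonneg (by linarith [hmono i])]
          exact mul_le_mul_of_nonneg_left (hB _) (by linarith [hmono i])
      _ = (∑ i ∈ range (n-1), (f i - f (i+1))) * B := by rw [Finset.sum_mul]
      _ = (f 0 - f (n-1)) * B := by rw [Finset.sum_range_sub' f (n-1)]
      _ ≤ f 0 * B := by
          apply mul_le_mul_of_nonneg_right _ hB0
          linarith [hf0 (n-1)]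
      _ = B * f 0 := mul_comm _ _
  calc |f (n-1) * (∑ i ∈ range n, g i) - ∑ i ∈ range (n-1), (f (i+1) - f i) * ∑ j ∈ range (i+1), g j|
      ≤ |f (n-1) * ∑ i ∈ range n, g i| +
        |∑ i ∈ range (n-1), (f (i+1) - f i) * ∑ j ∈ range (i+1), g j| := abs_sub _ _
    _ ≤ B * f 0 + B * f 0 := add_le_add h1 h2
    _ = 2 * B * f 0 := by ring

lemma F_bound_pos {t : ℝ} (ht : 0 < t) (ht1 : t ≤ 1) (J : ℕ) :
    |∑ k ∈ range J, Real.sin ((2*(k:ℝ)+1)*t) / (2*(k:ℝ)+1)| ≤ 2 + 2*π := by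
  have hpi : (0:ℝ) < π := Real.pi_pos
  set N : ℕ := ⌈1/t⌉₊ with hN
  have hNt : 1 ≤ (N:ℝ) * t := by
    have := Nat.le_ceil (1/t)
    calc (1:ℝ) = (1/t) * t := by field_simp
      _ ≤ (N:ℝ) * t := by apply mul_le_mul_of_nonneg_right this ht.le
  have hNt2 : (N:ℝ) * t ≤ 1 + t := by
    have := Nat.ceil_lt_add_one (a := 1/t) (by positivity)
    calc (N:ℝ) * t ≤ (1/t + 1) * t := by
          apply mul_le_mul_of_nonneg_right this.le ht.le
      _ = 1 + t := by field_simp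
  -- head bound: any partial sum of length ≤ N is bounded termwise
  have head : ∀ m : ℕ, m ≤ N →
      |∑ k ∈ range m, Real.sin ((2*(k:ℝ)+1)*t) / (2*(k:ℝ)+1)| ≤ 2 := by
    intro m hm
    calc |∑ k ∈ range m, Real.sin ((2*(k:ℝ)+1)*t) / (2*(k:ℝ)+1)|
        ≤ ∑ k ∈ range m, |Real.sin ((2*(k:ℝ)+1)*t) / (2*(k:ℝ)+1)| :=
          Finset.abs_sum_le_sum_abs _ _
      _ ≤ ∑ k ∈ range m, t := by
          apply Finset.sum_le_sum
          intro k _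
          have hk : (0:ℝ) < 2*(k:ℝ)+1 := by positivity
          rw [abs_div, abs_of_pos hk, div_le_iff₀ hk]
          calc |Real.sin ((2*(k:ℝ)+1)*t)| ≤ |(2*(k:ℝ)+1)*t| := Real.abs_sin_le_abs
            _ = (2*(k:ℝ)+1)*t := abs_of_pos (by positivity)
            _ = t * (2*(k:ℝ)+1) := mul_comm _ _
      _ = m * t := by rw [Finset.sum_const, Finset.card_range]; simp [nsmul_eq_mul]
      _ ≤ N * t := by
          apply mul_le_mul_of_nonneg_right _ ht.le
          exact_mod_cast hm
      _ ≤ 1 + t := hNt2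
      _ ≤ 2 := by linarith
  rcases le_or_gt J N with hJ | hJ
  · calc |∑ k ∈ range J, Real.sin ((2*(k:ℝ)+1)*t) / (2*(k:ℝ)+1)| ≤ 2 := head J hJ
      _ ≤ 2 + 2*π := by linarith
  · have hsplit : J = N + (J - N) := by omega
    rw [hsplit, Finset.sum_range_add]
    -- tail via Dirichlet
    have tail : |∑ i ∈ range (J-N), Real.sin ((2*((N:ℝ)+(i:ℝ))+1)*t) / (2*((N:ℝ)+(i:ℝ))+1)|
        ≤ 2*π := by
      have hd := dirichlet_bound (fun i => 1/(2*((N:ℝ)+(i:ℝ))+1))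
        (fun i => Real.sin ((2*((N:ℝ)+(i:ℝ))+1)*t)) (π/t)
        (fun k => by positivity)
        (fun k => by
          apply div_le_div_of_nonneg_left one_pos.le (by positivity)
          push_cast; linarith)
        (fun m => by
          have e : ∑ k ∈ range m, Real.sin ((2*((N:ℝ)+(k:ℝ))+1)*t)
              = (∑ k ∈ range (N+m), Real.sin ((2*(k:ℝ)+1)*t))
                - ∑ k ∈ range N, Real.sin ((2*(k:ℝ)+1)*t) := by
            rw [Finset.sum_range_add]; push_cast; ring
          rw [e]
          calc |_ - _| ≤ |∑ k ∈ range (N+m), Real.sin ((2*(k:ℝ)+1)*t)|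
                + |∑ k ∈ range N, Real.sin ((2*(k:ℝ)+1)*t)| := abs_sub _ _
            _ ≤ π/(2*t) + π/(2*t) := add_le_add (S_abs_le ht ht1 _) (S_abs_le ht ht1 _)
            _ = π/t := by field_simp; ring)
        (J-N)
      simp only [one_div] at hd
      norm_num at hd
      have hf0 : (2*π/t) * (2*(N:ℝ)+1)⁻¹ ≤ 2*π := by
        rw [mul_inv_le_iff₀ (by positivity)]
        have : 1 ≤ t * (2*((N:ℝ))+1) := by nlinarith
        calc 2*π/t = 2*π * (1/t) := by ring
          _ ≤ 2*π * ((2*(N:ℝ)+1)) := by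
              apply mul_le_mul_of_nonneg_left _ (by positivity)
              rw [div_le_iff₀ ht]; linarith
          _ = 2*π*(2*(N:ℝ)+1) := by ring
      calc |∑ i ∈ range (J-N), Real.sin ((2*((N:ℝ)+(i:ℝ))+1)*t) / (2*((N:ℝ)+(i:ℝ))+1)|
          = |∑ i ∈ range (J-N), (2*((N:ℝ)+(i:ℝ))+1)⁻¹ * Real.sin ((2*((N:ℝ)+(i:ℝ))+1)*t)| := by
            congr 1; apply Finset.sum_congr rfl; intro i _; rw [div_eq_inv_mul]
        _ ≤ 2 * (π/t) * (2*(N:ℝ)+1)⁻¹ := hd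
        _ = (2*π/t) * (2*(N:ℝ)+1)⁻¹ := by ring
        _ ≤ 2*π := hf0
    have etail : ∑ i ∈ range (J-N), Real.sin ((2*((N+i : ℕ):ℝ)+1)*t) / (2*((N+i : ℕ):ℝ)+1)
        = ∑ i ∈ range (J-N), Real.sin ((2*((N:ℝ)+(i:ℝ))+1)*t) / (2*((N:ℝ)+(i:ℝ))+1) := by
      apply Finset.sum_congr rfl; intro i _; push_cast; ring_nf
    calc |(∑ k ∈ range N, Real.sin ((2*(k:ℝ)+1)*t) / (2*(k:ℝ)+1)) +
          ∑ i ∈ range (J-N), Real.sin ((2*((N+i : ℕ):ℝ)+1)*t) / (2*((N+i : ℕ):ℝ)+1)|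
        ≤ |∑ k ∈ range N, Real.sin ((2*(k:ℝ)+1)*t) / (2*(k:ℝ)+1)| +
          |∑ i ∈ range (J-N), Real.sin ((2*((N+i : ℕ):ℝ)+1)*t) / (2*((N+i : ℕ):ℝ)+1)| :=
          abs_add_le _ _
      _ ≤ 2 + 2*π := by rw [etail]; exact add_le_add (head N le_rfl) tail

lemma F_bound_all {t : ℝ} (ht : |t| ≤ 1) (J : ℕ) :
    |∑ k ∈ range J, Real.sin ((2*(k:ℝ)+1)*t) / (2*(k:ℝ)+1)| ≤ 2 + 2*π := by
  have hpi : (0:ℝ) < π := Real.pi_pos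
  rcases lt_trichotomy t 0 with hneg | h0 | hposi
  · have : ∑ k ∈ range J, Real.sin ((2*(k:ℝ)+1)*t) / (2*(k:ℝ)+1)
        = -∑ k ∈ range J, Real.sin ((2*(k:ℝ)+1)*(-t)) / (2*(k:ℝ)+1) := by
      rw [← Finset.sum_neg_distrib]
      apply Finset.sum_congr rfl
      intro k _
      rw [show (2*(k:ℝ)+1)*(-t) = -((2*(k:ℝ)+1)*t) by ring, Real.sin_neg]
      ring
    rw [this, abs_neg]
    exact F_bound_pos (by linarith) (by rw [abs_of_neg hneg] at ht; linarith) J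
  · simp [h0]; positivity
  · exact F_bound_pos hposi (by rwa [abs_of_pos hposi] at ht) J

lemma pair_sum (J : ℕ) (h : ℕ → ℝ) :
    ∑ j ∈ range (2*J+1), h j = h 0 + ∑ k ∈ range J, (h (2*k+1) + h (2*k+2)) := by
  induction J with
  | zero => simp
  | succ J ih =>
    rw [show 2*(J+1)+1 = (2*J+1)+1+1 by ring, Finset.sum_range_succ, Finset.sum_range_succ,
      ih, Finset.sum_range_succ]
    ring

set_option maxHeartbeats 1000000 in
/-- the partial sums {1_J(·,a,b)} are uniformly bounded on (0,1). -/
theorem oneJ_uniformly_bounded (a b : ℝ) (ha : 0 ≤ a) (ha1 : a < 1) (hb : 0 < b) (hb1 : b ≤ 1)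
    (hab : a < b) :
    ∃ M : ℝ, ∀ (J : ℕ), ∀ x ∈ Set.Ioo (0 : ℝ) 1, |oneJ J x a b| ≤ M := by
  have hpi : (0:ℝ) < π := Real.pi_pos
  set χa : ℝ := if 0 < a then (1:ℝ) else 0 with hχa
  set χb : ℝ := if b < 1 then (1:ℝ) else 0 with hχb
  have hχa01 : 0 ≤ χa ∧ χa ≤ 1 := by rw [hχa]; split_ifs <;> norm_num
  have hχb01 : 0 ≤ χb ∧ χb ≤ 1 := by rw [hχb]; split_ifs <;> norm_num
  have hg0 : |gfun 0 a b| ≤ 1 := by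
    have e : gfun 0 a b = 1 - (1/2)*(χa + χb) := by
      simp only [gfun, hχa, hχb, if_true]
    rw [e, abs_le]
    constructor <;> nlinarith [hχa01.1, hχa01.2, hχb01.1, hχb01.2]
  refine ⟨1 + (2/π) * (2 * (2 + 2*π)), ?_⟩
  intro J x hx
  obtain ⟨hx0, hx1⟩ := hx
  -- key representation
  have key : oneJ J x a b = gfun 0 a b +
      (2/π) * (χa * (∑ k ∈ range J, Real.sin ((2*(k:ℝ)+1)*(x-a)) / (2*(k:ℝ)+1)) +
               χb * (∑ k ∈ range J, Real.sin ((2*(k:ℝ)+1)*(b-x)) / (2*(k:ℝ)+1))) := by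
    rw [oneJ, pair_sum J (fun j => cfun j x * gfun j a b)]
    have hc0 : cfun 0 x * gfun 0 a b = gfun 0 a b := by simp [cfun]
    rw [hc0]
    congr 1
    have hR : (2/π) * (χa * ∑ k ∈ range J, Real.sin ((2*(k:ℝ)+1)*(x-a)) / (2*(k:ℝ)+1) +
        χb * ∑ k ∈ range J, Real.sin ((2*(k:ℝ)+1)*(b-x)) / (2*(k:ℝ)+1))
        = ∑ k ∈ range J, (2/π) * (χa * (Real.sin ((2*(k:ℝ)+1)*(x-a)) / (2*(k:ℝ)+1)) +
            χb * (Real.sin ((2*(k:ℝ)+1)*(b-x)) / (2*(k:ℝ)+1))) := by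
      simp only [mul_add, Finset.mul_sum, Finset.sum_add_distrib]
    rw [hR]
    apply Finset.sum_congr rfl
    intro k _
    have h1 : (2*k+1) % 2 = 1 := by omega
    have h2 : (2*k+2) % 2 = 0 := by omega
    have h1' : 2*k+1 ≠ 0 := by omega
    have h2' : 2*k+2 ≠ 0 := by omega
    simp only [cfun, gfun, if_neg h1', if_neg h2', if_pos h1, h2, ← hχa, ← hχb]
    norm_num
    push_cast
    set n : ℝ := 2*(k:ℝ)+1 with hn
    have hne : ((2:ℝ)*(k:ℝ)+2) - 1 = n := by rw [hn]; ring
    rw [hne]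
    have hnpos : 0 < n := by rw [hn]; positivity
    have e1 : Real.sin (n*(x-a)) = Real.sin (n*x)*Real.cos (n*a)
        - Real.cos (n*x)*Real.sin (n*a) := by rw [mul_sub, Real.sin_sub]
    have e2 : Real.sin (n*(b-x)) = Real.sin (n*b)*Real.cos (n*x)
        - Real.cos (n*b)*Real.sin (n*x) := by rw [mul_sub, Real.sin_sub]
    rw [e1, e2]
    field_simp
    ring
  have hxa : |x - a| ≤ 1 := by rw [abs_le]; constructor <;> linarith
  have hbx : |b - x| ≤ 1 := by rw [abs_le]; constructor <;> linarith
  have hF1 := F_bound_all hxa J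
  have hF2 := F_bound_all hbx J
  rw [key]
  set F1 := ∑ k ∈ range J, Real.sin ((2*(k:ℝ)+1)*(x-a)) / (2*(k:ℝ)+1)
  set F2 := ∑ k ∈ range J, Real.sin ((2*(k:ℝ)+1)*(b-x)) / (2*(k:ℝ)+1)
  have hin : |χa * F1 + χb * F2| ≤ 2 * (2 + 2*π) := by
    calc |χa * F1 + χb * F2| ≤ |χa * F1| + |χb * F2| := abs_add_le _ _
      _ = |χa| * |F1| + |χb| * |F2| := by rw [abs_mul, abs_mul]
      _ ≤ 1 * (2 + 2*π) + 1 * (2 + 2*π) := by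
          have ha' : |χa| ≤ 1 := by rw [abs_of_nonneg hχa01.1]; exact hχa01.2
          have hb' : |χb| ≤ 1 := by rw [abs_of_nonneg hχb01.1]; exact hχb01.2
          exact add_le_add (mul_le_mul ha' hF1 (abs_nonneg _) one_pos.le)
            (mul_le_mul hb' hF2 (abs_nonneg _) one_pos.le)
      _ = 2 * (2 + 2*π) := by ring
  calc |gfun 0 a b + (2/π) * (χa * F1 + χb * F2)|
      ≤ |gfun 0 a b| + |(2/π) * (χa * F1 + χb * F2)| := abs_add_le _ _
    _ ≤ 1 + (2/π) * (2 * (2 + 2*π)) := by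
        apply add_le_add hg0
        rw [abs_mul, abs_of_pos (by positivity : (0:ℝ) < 2/π)]
        exact mul_le_mul_of_nonneg_left hin (by positivity)
end

section
/- Let p ∈ ℕ⁺, let a ∈ [0,1)^p and b ∈ (0,1]^p with a_l < b_l for each coordinate l, and let δ ∈ (0,1). Then the sequence of functions 1_J(x,a,b) = ∏_{l=1}^p 1_J(x_l, a_l, b_l), J = 0,1,2,…, converges uniformly to the indicator 𝟙(a < x < b) = ∏_{l=1}^p 𝟙(a_l < x_l < b_l) for x ranging over the product set U_{δ,(a,b)} = ∏_{l=1}^p U_{δ,(a_l,b_l)}. -/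
/-- p-dimensional partial sum: 1_J(x,a,b) = ∏_{l} 1_J(x_l,a_l,b_l). -/
noncomputable def oneJp {p : ℕ} (J : ℕ) (x a b : Fin p → ℝ) : ℝ :=
  ∏ l, oneJ J (x l) (a l) (b l)

/-- p-dimensional indicator: 𝟙(a<x<b) = ∏_l 𝟙(a_l<x_l<b_l). -/
noncomputable def indBox {p : ℕ} (a b x : Fin p → ℝ) : ℝ :=
  ∏ l, indIoo (a l) (b l) (x l)

/-- The set U_{δ,(a,b)}: (0,1) with (a-δ,a+δ) removed when a>0 and (b-δ,b+δ) removed when b<1. -/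
def Uset (δ a b : ℝ) : Set ℝ :=
  {x | x ∈ Set.Ioo (0 : ℝ) 1 ∧ (0 < a → x ∉ Set.Ioo (a - δ) (a + δ)) ∧
    (b < 1 → x ∉ Set.Ioo (b - δ) (b + δ))}

open Real Set Filter Topology MeasureTheory

noncomputable def oddSineSum (J : ℕ) (t : ℝ) : ℝ :=
  ∑ k ∈ Finset.range J, sin ((2 * k + 1) * t) / (2 * k + 1)

lemma oddSineSum_neg (J : ℕ) (t : ℝ) : oddSineSum J (-t) = -oddSineSum J t := by
  simp [oddSineSum, neg_div]

lemma two_mul_sin_mul_sum_cos_odd_mul (J : ℕ) (s : ℝ) :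
    2 * sin s * ∑ k ∈ Finset.range J, cos ((2 * k + 1) * s) = sin (2 * J * s) := by
  induction J with
  | zero => simp
  | succ J ih =>
    rw [Finset.sum_range_succ, mul_add, ih, two_mul_sin_mul_cos]
    have h : s - (2 * J + 1) * s = -(2 * J * s) := by ring
    rw [h, sin_neg]
    push_cast
    ring_nf

lemma tendsto_oddSineSum_pi_div_two :
    Tendsto (fun J => oddSineSum J (π / 2)) atTop (𝓝 (π / 4)) := by
  have h (k : ℕ) : sin ((2 * k + 1) * (π / 2)) = (-1) ^ k := by
    rw [show (2 * k + 1) * (π / 2) = k * π + π / 2 by ring, sin_add_pi_div_two,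
      cos_nat_mul_pi]
  simpa only [oddSineSum, h] using tendsto_sum_pi_div_four

lemma oddSineSum_eq_sub_integral (J : ℕ) {t : ℝ} (ht : t ∈ Ioo 0 π) :
    oddSineSum J t = oddSineSum J (π / 2) - ∫ s in t..π / 2, sin (2 * J * s) / (2 * sin s) := by
  have hsub : uIcc t (π / 2) ⊆ Ioo 0 π :=
    ordConnected_Ioo.uIcc_subset ht ⟨by positivity, by linarith [pi_pos]⟩
  have hint : ∫ s in t..π / 2, sin (2 * J * s) / (2 * sin s)
      = ∑ k ∈ Finset.range J, ∫ s in t..π / 2, cos ((2 * k + 1) * s) := by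
    rw [← intervalIntegral.integral_finsetSum fun k _ =>
      (by fun_prop : Continuous _).intervalIntegrable _ _]
    refine intervalIntegral.integral_congr fun s hs => ?_
    have hs' : sin s ≠ 0 := (sin_pos_of_pos_of_lt_pi (hsub hs).1 (hsub hs).2).ne'
    rw [← two_mul_sin_mul_sum_cos_odd_mul, mul_div_cancel_left₀ _ (mul_ne_zero two_ne_zero hs')]
  have hcos (k : ℕ) : ∫ s in t..π / 2, cos ((2 * k + 1) * s)
      = sin ((2 * k + 1) * (π / 2)) / (2 * k + 1) - sin ((2 * k + 1) * t) / (2 * k + 1) := by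
    rw [intervalIntegral.integral_comp_mul_left cos (by positivity), integral_cos, smul_eq_mul]
    field_simp
  simp only [hint, hcos, Finset.sum_sub_distrib, oddSineSum]
  ring

lemma abs_integral_mul_sin_le {u u' : ℝ → ℝ} {α β c M M' : ℝ} (hαβ : α ≤ β) (hc : 0 < c)
    (hu : ∀ s ∈ Icc α β, HasDerivAt u (u' s) s) (hu' : IntervalIntegrable u' volume α β)
    (hM : ∀ s ∈ Icc α β, |u s| ≤ M) (hM' : ∀ s ∈ Icc α β, |u' s| ≤ M') :
    |∫ s in α..β, u s * sin (c * s)| ≤ (2 * M + M' * (β - α)) / c := by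
  set v : ℝ → ℝ := fun s => -cos (c * s) / c
  have hv (s : ℝ) : HasDerivAt v (sin (c * s)) s :=
    (((hasDerivAt_id s).const_mul c).cos.neg.div_const c).congr_deriv (by simp [hc.ne'])
  have hv_le (s : ℝ) : |v s| ≤ 1 / c := by
    rw [abs_div, abs_neg, abs_of_pos hc]
    gcongr
    exact abs_cos_le_one _
  have hM0 : 0 ≤ M := (abs_nonneg _).trans (hM α ⟨le_rfl, hαβ⟩)
  have huv {s : ℝ} (hs : s ∈ Icc α β) : |u s * v s| ≤ M * (1 / c) := by
    rw [abs_mul]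
    exact mul_le_mul (hM s hs) (hv_le s) (abs_nonneg _) hM0
  have hu'v : |∫ s in α..β, u' s * v s| ≤ M' * (1 / c) * (β - α) := by
    have := intervalIntegral.norm_integral_le_of_norm_le_const (a := α) (b := β)
      (C := M' * (1 / c)) (f := fun s => u' s * v s) fun s hs => by
        rw [uIoc_of_le hαβ] at hs
        rw [norm_mul, Real.norm_eq_abs, Real.norm_eq_abs]
        exact mul_le_mul (hM' s (Ioc_subset_Icc_self hs)) (hv_le s) (abs_nonneg _)
          ((abs_nonneg _).trans (hM' s (Ioc_subset_Icc_self hs)))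
    rwa [Real.norm_eq_abs, abs_of_nonneg (sub_nonneg.2 hαβ)] at this
  rw [intervalIntegral.integral_mul_deriv_eq_deriv_mul (by rwa [uIcc_of_le hαβ])
    (fun s _ => hv s) hu' ((by fun_prop : Continuous _).intervalIntegrable _ _)]
  have h₁ := abs_sub (u β * v β - u α * v α) (∫ s in α..β, u' s * v s)
  have h₂ := abs_sub (u β * v β) (u α * v α)
  have h₃ := huv ⟨hαβ, le_rfl⟩
  have h₄ := huv ⟨le_rfl, hαβ⟩
  have h₅ : (2 * M + M' * (β - α)) / c = M * (1 / c) + M * (1 / c) + M' * (1 / c) * (β - α) := by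
    ring
  linarith

lemma abs_integral_sin_mul_div_two_sin_le {δ t c : ℝ} (hδ : 0 < δ) (ht : t ∈ Icc δ (π / 2))
    (hc : 0 < c) :
    |∫ s in t..π / 2, sin (c * s) / (2 * sin s)| ≤ (1 / sin δ + π / (4 * sin δ ^ 2)) / c := by
  have hsinδ : 0 < sin δ := sin_pos_of_pos_of_lt_pi hδ (by linarith [ht.1, ht.2, pi_pos])
  have hsin_ge {s : ℝ} (hs : s ∈ Icc t (π / 2)) : sin δ ≤ sin s :=
    sin_le_sin_of_le_of_le_pi_div_two (by linarith [pi_pos]) hs.2 (ht.1.trans hs.1)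
  have hderiv {s : ℝ} (hs : s ∈ Icc t (π / 2)) :
      HasDerivAt (fun s => (2 * sin s)⁻¹) (-(2 * cos s) / (2 * sin s) ^ 2) s :=
    ((hasDerivAt_sin s).const_mul 2).inv (by linarith [hsin_ge hs])
  have hcont : ContinuousOn (fun s => -(2 * cos s) / (2 * sin s) ^ 2) (uIcc t (π / 2)) := by
    refine continuousOn_of_forall_continuousAt fun s hs => ?_
    rw [uIcc_of_le ht.2] at hs
    have : 0 < sin s := hsinδ.trans_le (hsin_ge hs)
    exact ContinuousAt.div (by fun_prop) (by fun_prop) (by positivity)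
  have hM {s : ℝ} (hs : s ∈ Icc t (π / 2)) : |(2 * sin s)⁻¹| ≤ 1 / (2 * sin δ) := by
    have hle := hsin_ge hs
    have : 0 < sin s := hsinδ.trans_le hle
    rw [abs_of_pos (by positivity), one_div]
    gcongr
  have hM' {s : ℝ} (hs : s ∈ Icc t (π / 2)) :
      |-(2 * cos s) / (2 * sin s) ^ 2| ≤ 1 / (2 * sin δ ^ 2) := by
    have hle := hsin_ge hs
    have : 0 < sin s := hsinδ.trans_le hle
    rw [abs_div, abs_neg, abs_mul, abs_two, abs_of_pos (by positivity : 0 < (2 * sin s) ^ 2),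
      div_le_div_iff₀ (by positivity) (by positivity)]
    nlinarith [abs_cos_le_one s, pow_le_pow_left₀ hsinδ.le hle 2]
  calc |∫ s in t..π / 2, sin (c * s) / (2 * sin s)|
      = |∫ s in t..π / 2, (2 * sin s)⁻¹ * sin (c * s)| := by simp_rw [div_eq_inv_mul]
    _ ≤ (2 * (1 / (2 * sin δ)) + 1 / (2 * sin δ ^ 2) * (π / 2 - t)) / c :=
      abs_integral_mul_sin_le ht.2 hc (fun s hs => hderiv hs) (hcont.intervalIntegrable)
        (fun s hs => hM hs) (fun s hs => hM' hs)
    _ ≤ (1 / sin δ + π / (4 * sin δ ^ 2)) / c := by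
      rw [show 2 * (1 / (2 * sin δ)) = 1 / sin δ by field_simp]
      gcongr
      rw [one_div_mul_eq_div, div_le_div_iff₀ (by positivity) (by positivity)]
      nlinarith [mul_pos (hδ.trans_le ht.1) (pow_pos hsinδ 2)]

lemma TendstoUniformlyOn.union {ι α β : Type*} [UniformSpace β] {F : ι → α → β} {f : α → β}
    {p : Filter ι} {s t : Set α} (hs : TendstoUniformlyOn F f p s)
    (ht : TendstoUniformlyOn F f p t) : TendstoUniformlyOn F f p (s ∪ t) := fun u hu =>
  ((hs u hu).and (ht u hu)).mono fun _ h x hx => hx.elim (h.1 x) (h.2 x)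

theorem tendstoUniformlyOn_oddSineSum {δ : ℝ} (hδ : 0 < δ) :
    TendstoUniformlyOn oddSineSum (fun _ => π / 4) atTop (Icc δ (π / 2)) := by
  set C := 1 / sin δ + π / (4 * sin δ ^ 2)
  have hconst := tendsto_oddSineSum_pi_div_two.tendstoUniformlyOn_const (Icc δ (π / 2))
  have hint : TendstoUniformlyOn (fun (J : ℕ) t => ∫ s in t..π / 2, sin (2 * J * s) / (2 * sin s))
      (fun _ => 0) atTop (Icc δ (π / 2)) := by
    rw [Metric.tendstoUniformlyOn_iff]
    intro ε hε
    have hC : Tendsto (fun J : ℕ => C / 2 / J) atTop (𝓝 0) :=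
      tendsto_const_div_atTop_nhds_zero_nat _
    filter_upwards [hC.eventually (gt_mem_nhds hε), eventually_gt_atTop 0] with J hJε hJ t ht
    rw [dist_zero_left, Real.norm_eq_abs]
    calc _ ≤ C / (2 * J) := abs_integral_sin_mul_div_two_sin_le hδ ht (by positivity)
      _ < ε := by rwa [← div_div]
  refine ((hconst.fun_sub hint).congr ?_).congr_right fun t _ => sub_zero _
  exact Eventually.of_forall fun J t ht =>
    (oddSineSum_eq_sub_integral J ⟨hδ.trans_le ht.1, by linarith [ht.2, pi_pos]⟩).symm

theorem tendstoUniformlyOn_oddSineSum_sign {δ : ℝ} (hδ : 0 < δ) :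
    TendstoUniformlyOn oddSineSum (fun t => π / 4 * Real.sign t) atTop
      {t | δ ≤ |t| ∧ |t| ≤ π / 2} := by
  have hpos := tendstoUniformlyOn_oddSineSum hδ
  have hneg : TendstoUniformlyOn oddSineSum (fun _ => -(π / 4)) atTop (Neg.neg ⁻¹' Icc δ (π / 2)) :=
    (hpos.comp Neg.neg).fun_neg.congr <| Eventually.of_forall fun J t _ => by
      simp [oddSineSum_neg]
  refine ((hpos.congr_right fun t ht => ?_).union (hneg.congr_right fun t ht => ?_)).mono ?_
  · simp [Real.sign_of_pos (hδ.trans_le ht.1)]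
  · simp [Real.sign_of_neg (by linarith [ht.1] : t < 0)]
  · rintro t ⟨h₁, h₂⟩
    rcases le_or_gt 0 t with h | h
    · rw [abs_of_nonneg h] at h₁ h₂
      exact Or.inl ⟨h₁, h₂⟩
    · rw [abs_of_neg h] at h₁ h₂
      exact Or.inr ⟨h₁, h₂⟩

lemma cfun_mul_gfun_add_cfun_mul_gfun (k : ℕ) (x a b : ℝ) :
    cfun (2 * k + 1) x * gfun (2 * k + 1) a b + cfun (2 * k + 2) x * gfun (2 * k + 2) a b
      = 2 / π * ((if 0 < a then 1 else 0) * (sin ((2 * k + 1) * (x - a)) / (2 * k + 1))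
        + (if b < 1 then 1 else 0) * (sin ((2 * k + 1) * (b - x)) / (2 * k + 1))) := by
  have hodd : (2 * k + 1) % 2 = 1 := by omega
  have heven : (2 * k + 2) % 2 ≠ 1 := by omega
  simp only [cfun, gfun, hodd, heven, if_true, if_false, Nat.add_one_ne_zero,
    show 2 * k + 2 ≠ 0 by omega]
  push_cast
  rw [show (2 * k + 2 - 1 : ℝ) = 2 * k + 1 by ring, mul_sub _ x a, mul_sub _ b x, sin_sub, sin_sub]
  have : (2 * k + 1 : ℝ) ≠ 0 := by positivity
  field_simp
  ring

lemma oneJ_eq (J : ℕ) (x a b : ℝ) :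
    oneJ J x a b = gfun 0 a b + 2 / π * ((if 0 < a then 1 else 0) * oddSineSum J (x - a)
      + (if b < 1 then 1 else 0) * oddSineSum J (b - x)) := by
  induction J with
  | zero => simp [oneJ, oddSineSum, cfun]
  | succ J ih =>
    have hsucc : oneJ (J + 1) x a b = oneJ J x a b + (cfun (2 * J + 1) x * gfun (2 * J + 1) a b
        + cfun (2 * J + 2) x * gfun (2 * J + 2) a b) := by
      simp only [oneJ, show 2 * (J + 1) + 1 = 2 * J + 1 + 1 + 1 by ring, Finset.sum_range_succ]
      ring
    rw [hsucc, ih, cfun_mul_gfun_add_cfun_mul_gfun]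
    simp only [oddSineSum, Finset.sum_range_succ]
    ring

lemma ite_pos_mul_sign_sub {a x : ℝ} (hx : 0 < x) (hxa : 0 < a → x ≠ a) :
    (if 0 < a then 1 else 0) * Real.sign (x - a)
      = 2 * (if a < x then 1 else 0) - 2 + (if 0 < a then 1 else 0) := by
  by_cases ha : 0 < a
  · rcases (hxa ha).lt_or_gt with h | h
    · norm_num [ha, h.not_gt, Real.sign_of_neg (sub_neg.2 h)]
    · simp [ha, h, Real.sign_of_pos (sub_pos.2 h)]
  · simp [ha, (not_lt.1 ha).trans_lt hx]

lemma ite_lt_one_mul_sign_sub {b x : ℝ} (hx : x < 1) (hxb : b < 1 → x ≠ b) :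
    (if b < 1 then 1 else 0) * Real.sign (b - x)
      = 2 * (if x < b then 1 else 0) - 2 + (if b < 1 then 1 else 0) := by
  by_cases hb : b < 1
  · rcases (hxb hb).lt_or_gt with h | h
    · simp [hb, h, Real.sign_of_pos (sub_pos.2 h)]
    · norm_num [hb, h.not_gt, Real.sign_of_neg (sub_neg.2 h)]
  · simp [hb, hx.trans_le (not_lt.1 hb)]

lemma indIoo_eq_gfun_zero_add_sign {a b x : ℝ} (hab : a < b) (hx : x ∈ Ioo 0 1)
    (hxa : 0 < a → x ≠ a) (hxb : b < 1 → x ≠ b) :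
    indIoo a b x = gfun 0 a b + 2 / π * ((if 0 < a then 1 else 0) * (π / 4 * Real.sign (x - a))
      + (if b < 1 then 1 else 0) * (π / 4 * Real.sign (b - x))) := by
  have hsum : 2 / π * ((if 0 < a then 1 else 0) * (π / 4 * Real.sign (x - a))
      + (if b < 1 then 1 else 0) * (π / 4 * Real.sign (b - x)))
      = ((if 0 < a then 1 else 0) * Real.sign (x - a)
        + (if b < 1 then 1 else 0) * Real.sign (b - x)) / 2 := by
    field_simp
    ring
  rw [hsum, ite_pos_mul_sign_sub hx.1 hxa, ite_lt_one_mul_sign_sub hx.2 hxb]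
  simp only [indIoo, gfun, if_true, ite_and]
  split_ifs <;> linarith

lemma tendstoUniformlyOn_ite_mul_oddSineSum {P : Prop} [Decidable P] {δ : ℝ} (hδ : 0 < δ)
    {φ : ℝ → ℝ} {S : Set ℝ} (hφ : P → MapsTo φ S {t | δ ≤ |t| ∧ |t| ≤ π / 2}) :
    TendstoUniformlyOn (fun J x => (if P then 1 else 0) * oddSineSum J (φ x))
      (fun x => (if P then 1 else 0) * (π / 4 * Real.sign (φ x))) atTop S := by
  by_cases hP : P
  · simp only [hP, if_true, one_mul]
    exact ((tendstoUniformlyOn_oddSineSum_sign hδ).comp φ).mono (hφ hP)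
  · simpa [hP] using
      tendsto_const_nhds.tendstoUniformlyOn_const (p := atTop) (g := fun _ : ℕ => (0 : ℝ)) S

lemma le_abs_sub_of_notMem_Ioo {x c δ : ℝ} (h : x ∉ Ioo (c - δ) (c + δ)) : δ ≤ |x - c| := by
  simpa [Real.Ioo_eq_ball, Real.dist_eq] using h

theorem tendstoUniformlyOn_oneJ {a b δ : ℝ} (ha : a ∈ Ico 0 1) (hab : a < b) (hδ : 0 < δ) :
    TendstoUniformlyOn (fun J x => oneJ J x a b) (indIoo a b) atTop (Uset δ a b) := by
  have hπ : 1 < π / 2 := by linarith [pi_gt_three]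
  have hA := tendstoUniformlyOn_ite_mul_oddSineSum (P := 0 < a) hδ (φ := (· - a))
    (S := Uset δ a b) fun h x ⟨⟨hx0, hx1⟩, hxa, _⟩ => ⟨le_abs_sub_of_notMem_Ioo (hxa h), by
      dsimp only; rw [abs_le]; constructor <;> linarith [ha.1, ha.2]⟩
  have hB := tendstoUniformlyOn_ite_mul_oddSineSum (P := b < 1) hδ (φ := (b - ·))
    (S := Uset δ a b) fun h x ⟨⟨hx0, hx1⟩, _, hxb⟩ =>
      ⟨abs_sub_comm x b ▸ le_abs_sub_of_notMem_Ioo (hxb h), by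
        dsimp only; rw [abs_le]; constructor <;> linarith [ha.1, ha.2]⟩
  have hg : UniformContinuous fun y : ℝ => gfun 0 a b + 2 / π * y :=
    uniformContinuous_const.add (uniformContinuous_const_smul (2 / π))
  refine ((hg.comp_tendstoUniformlyOn (hA.fun_add hB)).congr ?_).congr_right ?_
  · exact Eventually.of_forall fun J x _ => (oneJ_eq J x a b).symm
  · rintro x ⟨hx, hxa, hxb⟩
    refine (indIoo_eq_gfun_zero_add_sign hab hx (fun h hxa' => hxa h ?_)
      fun h hxb' => hxb h ?_).symm <;> constructor <;> linarith

lemma TendstoUniformlyOn.mul_of_bounded {ι α R : Type*} [SeminormedRing R] {F G : ι → α → R}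
    {f g : α → R} {p : Filter ι} {s : Set α} {C : ℝ} (hF : TendstoUniformlyOn F f p s)
    (hG : TendstoUniformlyOn G g p s) (hf : ∀ x ∈ s, ‖f x‖ ≤ C) (hg : ∀ x ∈ s, ‖g x‖ ≤ C) :
    TendstoUniformlyOn (fun i x => F i x * G i x) (fun x => f x * g x) p s := by
  rw [Metric.tendstoUniformlyOn_iff] at hF hG ⊢
  intro ε hε
  set K := |C| + 1
  have hK : 1 ≤ K := by simp [K]
  set η := min 1 (ε / (4 * K))
  have hη : 0 < η := by positivity
  have hη1 : η ≤ 1 := min_le_left _ _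
  have hηε : 4 * K * η ≤ ε := by
    rw [mul_comm]; exact (le_div_iff₀ (by positivity)).1 (min_le_right _ _)
  filter_upwards [hF η hη, hG η hη] with i hFi hGi x hx
  have h₁ := hFi x hx
  have h₂ := hGi x hx
  rw [dist_eq_norm] at h₁ h₂ ⊢
  replace h₁ := h₁.le
  replace h₂ := h₂.le
  have hfK : ‖f x‖ ≤ K := (hf x hx).trans ((le_abs_self C).trans (by linarith))
  have hgK : ‖g x‖ ≤ K := (hg x hx).trans ((le_abs_self C).trans (by linarith))
  calc ‖f x * g x - F i x * G i x‖
      = ‖(f x - F i x) * g x + f x * (g x - G i x) - (f x - F i x) * (g x - G i x)‖ := by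
        congr 1; noncomm_ring
    _ ≤ ‖f x - F i x‖ * ‖g x‖ + ‖f x‖ * ‖g x - G i x‖ + ‖f x - F i x‖ * ‖g x - G i x‖ :=
        (norm_sub_le _ _).trans (add_le_add ((norm_add_le _ _).trans
          (add_le_add (norm_mul_le _ _) (norm_mul_le _ _))) (norm_mul_le _ _))
    _ ≤ η * K + K * η + η * η := by gcongr
    _ ≤ 3 * K * η := by nlinarith
    _ < 4 * K * η := by nlinarith
    _ ≤ ε := hηε

lemma tendstoUniformlyOn_finset_prod {ι κ α R : Type*} [NormedCommRing R] [NormOneClass R]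
    {F : κ → ι → α → R} {f : κ → α → R} {p : Filter ι} {S : Set α} (s : Finset κ)
    (hF : ∀ k ∈ s, TendstoUniformlyOn (F k) (f k) p S)
    (hf : ∀ k ∈ s, ∃ C, ∀ x ∈ S, ‖f k x‖ ≤ C) :
    TendstoUniformlyOn (fun i x => ∏ k ∈ s, F k i x) (fun x => ∏ k ∈ s, f k x) p S := by
  classical
  induction s using Finset.induction_on with
  | empty => simpa using tendsto_const_nhds.tendstoUniformlyOn_const (g := fun _ : ι => (1 : R)) S
  | insert k s hk ih =>
    simp only [Finset.prod_insert hk]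
    obtain ⟨C, hC⟩ := hf k (Finset.mem_insert_self k s)
    choose! D hD using fun j hj => hf j (Finset.mem_insert_of_mem hj)
    have hprod (x : α) (hx : x ∈ S) : ‖∏ j ∈ s, f j x‖ ≤ ∏ j ∈ s, D j :=
      (Finset.norm_prod_le _ _).trans
        (Finset.prod_le_prod (fun _ _ => norm_nonneg _) fun j hj => hD j hj x hx)
    exact (hF k (Finset.mem_insert_self k s)).mul_of_bounded
      (ih (fun j hj => hF j (Finset.mem_insert_of_mem hj))
        fun j hj => hf j (Finset.mem_insert_of_mem hj))
      (fun x hx => (hC x hx).trans (le_max_left _ _))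
      (fun x hx => (hprod x hx).trans (le_max_right _ _))

lemma norm_indIoo_le_one (a b x : ℝ) : ‖indIoo a b x‖ ≤ 1 := by
  unfold indIoo
  split_ifs <;> simp

theorem oneJp_tendstoUniformlyOn_general (p : ℕ) (a b : Fin p → ℝ) (δ : ℝ)
    (ha : ∀ l, a l ∈ Set.Ico (0 : ℝ) 1)
    (hab : ∀ l, a l < b l) (hδ : 0 < δ) :
    TendstoUniformlyOn (fun J x => oneJp J x a b) (fun x => indBox a b x)
      Filter.atTop {x : Fin p → ℝ | ∀ l, x l ∈ Uset δ (a l) (b l)} := by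
  have hcoord (l : Fin p) : TendstoUniformlyOn (fun J x => oneJ J (x l) (a l) (b l))
      (fun x => indIoo (a l) (b l) (x l)) atTop {x : Fin p → ℝ | ∀ l, x l ∈ Uset δ (a l) (b l)} :=
    ((tendstoUniformlyOn_oneJ (ha l) (hab l) hδ).comp (fun x : Fin p → ℝ => x l)).mono
      fun _ hx => hx l
  exact tendstoUniformlyOn_finset_prod Finset.univ (fun l _ => hcoord l)
    fun _ _ => ⟨1, fun _ _ => norm_indIoo_le_one _ _ _⟩

/-- the p-dimensional partial sums converge uniformly to the box indicator on
the product set ∏_l U_{δ,(a_l,b_l)}. -/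
theorem oneJp_tendstoUniformlyOn (p : ℕ) (hp : 0 < p) (a b : Fin p → ℝ) (δ : ℝ)
    (ha : ∀ l, a l ∈ Set.Ico (0 : ℝ) 1) (hb : ∀ l, b l ∈ Set.Ioc (0 : ℝ) 1)
    (hab : ∀ l, a l < b l) (hδ : 0 < δ) (hδ1 : δ < 1) :
    TendstoUniformlyOn (fun J x => oneJp J x a b) (fun x => indBox a b x)
      Filter.atTop {x : Fin p → ℝ | ∀ l, x l ∈ Uset δ (a l) (b l)} :=
  oneJp_tendstoUniformlyOn_general p a b δ ha hab hδ
end
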